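/- arXiv:1101.5619 — 2 statements merged into one kernel-verified Lean document; each statement's English description precedes it below -/
import Mathlib

section
/- Let k ≥ 0 and let x ∈ ℓ¹ satisfy π_k(x) = x. Then for every t ∈ ℓ¹, x ∈ [[0,t]]_sp if and only if x ∈ [[0, π_k(t)]]_sp. Equivalently, for every sequence (t_j, j ≥ 1) in ℓ¹, the fringe sets satisfy {j : π_k(t_j) ∈ F_x} = {j : t_j ∈ F_x}. -/
/-- `ℓ¹`, the Banach space of absolutely summable real sequences. -/
noncomputable abbrev Ell1 : Type := lp (fun _ : ℕ => ℝ) 1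

/-- Coordinate truncation keeping the first `m` coordinates. -/
noncomputable def trunc (m : ℕ) (x : Ell1) : Ell1 :=
  ⟨fun i => if i < m then x i else 0, by
    refine Memℓp.of_exponent_ge (memℓp_zero ?_) zero_le
    refine Set.Finite.subset (Set.finite_Iio m) ?_
    intro i hi
    simp only [Set.mem_setOf_eq] at hi
    by_contra h
    simp only [Set.mem_Iio, not_lt] at h
    exact hi (if_neg (not_lt.mpr h))⟩

/-- The open stick-breaking path `[[0,x]]°_sp`. -/
def stickCore (x : Ell1) : Set Ell1 :=
  ⋃ m : ℕ, {y | ∃ s ∈ Set.Icc (0 : ℝ) 1, y = (1 - s) • trunc m x + s • trunc (m + 1) x}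

/-- The stick-breaking path `[[0,x]]_sp`, the closure of `[[0,x]]°_sp` in `ℓ¹`. -/
noncomputable def stickPath (x : Ell1) : Set Ell1 :=
  closure (stickCore x)


/-- The fringe set of `x`: all `y` whose stick-breaking path passes through `x`. -/
noncomputable def fringe (x : Ell1) : Set Ell1 :=
  {y | x ∈ stickPath y}

lemma trunc_apply (m : ℕ) (x : Ell1) (i : ℕ) :
    (trunc m x : ∀ _ : ℕ, ℝ) i = if i < m then x i else 0 := rfl

lemma trunc_trunc (m k : ℕ) (x : Ell1) : trunc m (trunc k x) = trunc (min m k) x := by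
  apply lp.ext
  funext i
  simp only [trunc_apply, lt_min_iff]
  by_cases h1 : i < m <;> by_cases h2 : i < k <;> simp [h1, h2]

lemma trunc_sub (k : ℕ) (a b : Ell1) : trunc k (a - b) = trunc k a - trunc k b := by
  apply lp.ext
  funext i
  simp only [trunc_apply, lp.coeFn_sub, Pi.sub_apply]
  by_cases h : i < k <;> simp [h]

lemma trunc_add (k : ℕ) (a b : Ell1) : trunc k (a + b) = trunc k a + trunc k b := by
  apply lp.ext
  funext i
  simp only [trunc_apply, lp.coeFn_add, Pi.add_apply]
  by_cases h : i < k <;> simp [h]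

lemma trunc_smul (k : ℕ) (c : ℝ) (a : Ell1) : trunc k (c • a) = c • trunc k a := by
  apply lp.ext
  funext i
  simp only [trunc_apply, lp.coeFn_smul, Pi.smul_apply, smul_eq_mul]
  by_cases h : i < k <;> simp [h]

lemma norm_trunc_le (k : ℕ) (y : Ell1) : ‖trunc k y‖ ≤ ‖y‖ := by
  have hp : (0:ℝ) < (1 : ENNReal).toReal := by norm_num
  refine lp.norm_le_of_tsum_le hp (norm_nonneg y) ?_
  rw [lp.norm_rpow_eq_tsum hp]
  refine Summable.tsum_le_tsum (fun i => ?_) ((lp.memℓp (trunc k y)).summable hp)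
    ((lp.memℓp y).summable hp)
  simp only [ENNReal.toReal_one, Real.rpow_one, trunc_apply]
  by_cases h : i < k <;> simp [h, abs_nonneg]

lemma lipschitz_trunc (k : ℕ) : LipschitzWith 1 (trunc k) := by
  refine LipschitzWith.of_dist_le_mul fun a b => ?_
  rw [dist_eq_norm, dist_eq_norm, ← trunc_sub, NNReal.coe_one, one_mul]
  exact norm_trunc_le k _

lemma stickCore_trunc_subset (k : ℕ) (t : Ell1) :
    stickCore (trunc k t) ⊆ stickCore t := by
  intro y hy
  simp only [stickCore, Set.mem_iUnion, Set.mem_setOf_eq] at hy ⊢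
  obtain ⟨m, s, hs, hy⟩ := hy
  rw [trunc_trunc, trunc_trunc] at hy
  by_cases hm : m < k
  · refine ⟨m, s, hs, ?_⟩
    rw [hy, min_eq_left hm.le, min_eq_left hm]
  · push_neg at hm
    refine ⟨k, 0, by constructor <;> norm_num, ?_⟩
    rw [hy, min_eq_right hm, min_eq_right (hm.trans (Nat.le_succ m)), ← add_smul,
      sub_add_cancel, one_smul, sub_zero, one_smul, zero_smul, add_zero]

lemma trunc_image_stickCore (k : ℕ) (t : Ell1) :
    trunc k '' stickCore t ⊆ stickCore (trunc k t) := by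
  rintro _ ⟨y, hy, rfl⟩
  simp only [stickCore, Set.mem_iUnion, Set.mem_setOf_eq] at hy ⊢
  obtain ⟨m, s, hs, rfl⟩ := hy
  refine ⟨m, s, hs, ?_⟩
  rw [trunc_add, trunc_smul, trunc_smul, trunc_trunc, trunc_trunc,
    trunc_trunc, trunc_trunc, min_comm m k, min_comm (m+1) k]

/-- if `π_k(x) = x` then membership of `x` in a stick-breaking path is
unchanged by truncating the endpoint; equivalently, fringe sets of truncated samples agree
with fringe sets of the samples. -/
theorem mem_stickPath_trunc_iff (k : ℕ) (x : Ell1) (hx : trunc k x = x) :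
    (∀ t : Ell1, x ∈ stickPath t ↔ x ∈ stickPath (trunc k t)) ∧
      (∀ t : ℕ → Ell1, {j : ℕ | trunc k (t j) ∈ fringe x} = {j : ℕ | t j ∈ fringe x}) := by
  have main : ∀ t : Ell1, x ∈ stickPath t ↔ x ∈ stickPath (trunc k t) := by
    intro t
    constructor
    · intro h
      have h1 : trunc k x ∈ trunc k '' closure (stickCore t) := ⟨x, h, rfl⟩
      have h2 : trunc k '' closure (stickCore t) ⊆ closure (trunc k '' stickCore t) :=
        image_closure_subset_closure_image (lipschitz_trunc k).continuous
      have h3 := closure_mono (trunc_image_stickCore k t) (h2 h1)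
      rwa [hx] at h3
    · intro h
      exact closure_mono (stickCore_trunc_subset k t) h
  refine ⟨main, fun t => ?_⟩
  ext j
  simp only [Set.mem_setOf_eq, fringe]
  exact (main (t j)).symm
end

section
/- Let (t_j, j ≥ 1) be any sequence of points of ℓ¹. For each n ≥ 1 define 𝓗ₙ := {{j ∈ [n] : x ∈ [[0, t_j]]_sp} : x ∈ ℓ¹} ∪ Ξ([n]). Then each 𝓗ₙ is a hierarchy on [n], and the sequence is consistent: 𝓗ₙ = {H ∩ [n] : H ∈ 𝓗ₙ₊₁} for every n, so (𝓗ₙ, n ≥ 1) is a hierarchy on ℕ. -/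
/-- A hierarchy on the set `S ⊆ ℕ`: a collection of subsets of `S` in which any two members
are nested or disjoint, containing `S` itself, all singletons of elements of `S`, and `∅`. -/
def IsHierarchyOn (S : Set ℕ) (H : Set (Set ℕ)) : Prop :=
  (∀ A ∈ H, A ⊆ S) ∧
    (∀ A ∈ H, ∀ B ∈ H, A ∩ B = A ∨ A ∩ B = B ∨ A ∩ B = ∅) ∧
    S ∈ H ∧ (∀ s ∈ S, {s} ∈ H) ∧ ∅ ∈ H

/-- The trivial hierarchy `Ξ(S) = {S} ∪ {{s} : s ∈ S} ∪ {∅}`. -/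
def trivialHierarchy (S : Set ℕ) : Set (Set ℕ) :=
  {S, ∅} ∪ {B | ∃ s ∈ S, B = {s}}

/-- A hierarchy on `ℕ`, encoded with `0`-based labels: `H n` is the hierarchy `𝓗_{n+1}` on
`[n+1] = {0, 1, …, n}`, and the sequence is consistent under restriction. -/
def IsHierarchySeq (H : ℕ → Set (Set ℕ)) : Prop :=
  ∀ n : ℕ, IsHierarchyOn (Set.Iio (n + 1)) (H n) ∧
    H n = (fun B => B ∩ Set.Iio (n + 1)) '' H (n + 1)

namespace SP

/-- coordinate-wise "prefix" predicate -/
def Pfx (t x : Ell1) : Prop :=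
  ∀ i : ℕ, x i = t i ∨ (x i * (x i - t i) ≤ 0 ∧ ∀ j, i < j → x j = 0)

/-- structured prefix predicate -/
def St (t x : Ell1) : Prop :=
  x = t ∨ ∃ m : ℕ, ∃ s : ℝ, 0 ≤ s ∧ s ≤ 1 ∧ (∀ i, i < m → x i = t i) ∧
    x m = s * t m ∧ ∀ j, m < j → x j = 0

lemma eval_continuous (i : ℕ) : Continuous fun x : Ell1 => x i := by
  apply LipschitzWith.continuous (K := 1)
  apply LipschitzWith.of_dist_le_mul
  intro x y
  rw [NNReal.coe_one, one_mul, Real.dist_eq, dist_eq_norm]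
  have h : x i - y i = (x - y) i := by simp [lp.coeFn_sub]
  rw [h, ← Real.norm_eq_abs]
  exact lp.norm_apply_le_norm one_ne_zero (x - y) i

lemma isClosed_pfx (t : Ell1) : IsClosed {x : Ell1 | Pfx t x} := by
  have hset : {x : Ell1 | Pfx t x} =
      ⋂ i : ℕ, ({x : Ell1 | x i = t i} ∪
        ({x : Ell1 | x i * (x i - t i) ≤ 0} ∩ ⋂ j : ℕ, ⋂ _ : i < j, {x : Ell1 | x j = 0})) := by
    ext x
    simp only [Set.mem_setOf_eq, Set.mem_iInter, Set.mem_union, Set.mem_inter_iff, Pfx]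
  rw [hset]
  refine isClosed_iInter fun i => IsClosed.union ?_ (IsClosed.inter ?_ ?_)
  · exact isClosed_eq (eval_continuous i) continuous_const
  · exact isClosed_le (((eval_continuous i).mul ((eval_continuous i).sub continuous_const)))
      continuous_const
  · exact isClosed_iInter fun j => isClosed_iInter fun _ => isClosed_eq (eval_continuous j)
      continuous_const

lemma exists_s {a b : ℝ} (h : a * (a - b) ≤ 0) : ∃ s : ℝ, 0 ≤ s ∧ s ≤ 1 ∧ a = s * b := by
  rcases eq_or_ne b 0 with hb | hb
  · subst hb
    have ha : a = 0 := by nlinarith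
    exact ⟨0, le_refl _, zero_le_one, by simp [ha]⟩
  · have hb2 : 0 < b * b := mul_self_pos.mpr hb
    refine ⟨a * b / (b * b), div_nonneg (by nlinarith) hb2.le,
      (div_le_one hb2).mpr (by nlinarith), ?_⟩
    rw [div_mul_eq_mul_div, eq_div_iff hb2.ne']
    ring

lemma st_of_pfx {t x : Ell1} (h : Pfx t x) : St t x := by
  classical
  by_cases hall : ∀ i, x i = t i
  · exact Or.inl (lp.ext (funext hall))
  · push_neg at hall
    right
    set m := Nat.find hall with hm
    have hspec : x m ≠ t m := Nat.find_spec hall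
    have hmin : ∀ i, i < m → x i = t i := fun i hi => by
      by_contra hne; exact (Nat.find_min hall hi) hne
    rcases h m with h1 | ⟨h2, h3⟩
    · exact absurd h1 hspec
    · obtain ⟨s, hs0, hs1, hseq⟩ := exists_s h2
      exact ⟨m, s, hs0, hs1, hmin, hseq, h3⟩

lemma pfx_of_st {t x : Ell1} (h : St t x) : Pfx t x := by
  rcases h with rfl | ⟨m, s, hs0, hs1, hpre, hm, htail⟩
  · exact fun i => Or.inl rfl
  · intro i
    rcases lt_trichotomy i m with hi | rfl | hi
    · exact Or.inl (hpre i hi)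
    · refine Or.inr ⟨?_, htail⟩
      rw [hm]
      nlinarith [mul_nonneg (mul_nonneg hs0 (sub_nonneg.mpr hs1)) (sq_nonneg (t i))]
    · refine Or.inr ⟨?_, fun j hj => htail j (hi.trans hj)⟩
      rw [htail i hi]; simp

lemma seg_apply (t : Ell1) (m : ℕ) (s : ℝ) (i : ℕ) :
    ((1 - s) • trunc m t + s • trunc (m + 1) t) i =
      (1 - s) * (if i < m then t i else 0) + s * (if i < m + 1 then t i else 0) := by
  rfl

lemma core_subset_pfx (t : Ell1) : stickCore t ⊆ {x : Ell1 | Pfx t x} := by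
  rintro y hy
  simp only [stickCore, Set.mem_iUnion, Set.mem_setOf_eq] at hy
  obtain ⟨m, s, ⟨hs0, hs1⟩, rfl⟩ := hy
  apply pfx_of_st
  refine Or.inr ⟨m, s, hs0, hs1, fun i hi => ?_, ?_, fun j hj => ?_⟩
  · rw [seg_apply, if_pos hi, if_pos (hi.trans (Nat.lt_succ_self _))]; ring
  · rw [seg_apply, if_neg (lt_irrefl _), if_pos (Nat.lt_succ_self _)]; ring
  · rw [seg_apply, if_neg (by omega), if_neg (by omega)]; ring

lemma tendsto_trunc (t : Ell1) : Filter.Tendsto (fun m => trunc m t) Filter.atTop (nhds t) := by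
  haveI : Fact ((1 : ENNReal) ≤ 1) := ⟨le_refl _⟩
  have H := (lp.hasSum_single (E := fun _ : ℕ => ℝ) (p := 1) ENNReal.one_ne_top t).tendsto_sum_nat
  have he : (fun n => ∑ i ∈ Finset.range n, lp.single 1 i (t i)) = fun n => trunc n t := by
    funext n
    apply lp.ext
    funext j
    simp only [lp.coeFn_sum, Finset.sum_apply, lp.single_apply, Finset.sum_dite_eq,
      Finset.mem_range, Pi.single_apply, Finset.sum_ite_eq, Finset.sum_ite_eq']
    rfl
  rwa [he] at H

lemma trunc_mem_core (t : Ell1) (m : ℕ) : trunc m t ∈ stickCore t := by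
  simp only [stickCore, Set.mem_iUnion, Set.mem_setOf_eq]
  exact ⟨m, 0, ⟨le_refl _, zero_le_one⟩, by simp⟩

lemma pfx_subset_path (t : Ell1) : {x : Ell1 | Pfx t x} ⊆ stickPath t := by
  intro x hx
  rcases st_of_pfx hx with rfl | ⟨m, s, hs0, hs1, hpre, hm, htail⟩
  · exact mem_closure_of_tendsto (tendsto_trunc x)
      (Filter.Eventually.of_forall fun m => trunc_mem_core x m)
  · apply subset_closure
    simp only [stickCore, Set.mem_iUnion, Set.mem_setOf_eq]
    refine ⟨m, s, ⟨hs0, hs1⟩, lp.ext (funext fun i => ?_)⟩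
    show x i = ((1 - s) • trunc m t + s • trunc (m + 1) t) i
    rcases lt_trichotomy i m with hi | rfl | hi
    · rw [seg_apply, if_pos hi, if_pos (hi.trans (Nat.lt_succ_self _)), hpre i hi]; ring
    · rw [seg_apply, if_neg (lt_irrefl _), if_pos (Nat.lt_succ_self _), hm]; ring
    · rw [seg_apply, if_neg (by omega), if_neg (by omega), htail i hi]; ring

lemma path_eq_pfx (t : Ell1) : stickPath t = {x : Ell1 | Pfx t x} :=
  Set.Subset.antisymm (closure_minimal (core_subset_pfx t) (isClosed_pfx t)) (pfx_subset_path t)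

lemma mem_path_iff_st {t x : Ell1} : x ∈ stickPath t ↔ St t x := by
  rw [path_eq_pfx]
  exact ⟨fun h => st_of_pfx h, fun h => pfx_of_st h⟩

lemma st_aux {u x y : Ell1} {m k : ℕ} {s r : ℝ} (hs0 : 0 ≤ s) (hs1 : s ≤ 1)
    (hr0 : 0 ≤ r)
    (hxpre : ∀ i, i < m → x i = u i) (hxm : x m = s * u m) (hxt : ∀ j, m < j → x j = 0)
    (hypre : ∀ i, i < k → y i = u i) (hyk : y k = r * u k)
    (hmk : m < k ∨ (m = k ∧ s ≤ r)) : St y x := by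
  rcases hmk with hmk | ⟨rfl, hsr⟩
  · refine Or.inr ⟨m, s, hs0, hs1, fun i hi => (hxpre i hi).trans (hypre i (hi.trans hmk)).symm,
      ?_, hxt⟩
    rw [hxm, hypre m hmk]
  · rcases eq_or_lt_of_le hr0 with hr | hr
    · have hs : s = 0 := le_antisymm (hsr.trans hr.symm.le) hs0
      refine Or.inr ⟨m, 0, le_refl _, zero_le_one, fun i hi => (hxpre i hi).trans
        (hypre i hi).symm, ?_, hxt⟩
      rw [hxm, hs]; ring
    · refine Or.inr ⟨m, s / r, div_nonneg hs0 hr.le, (div_le_one hr).mpr hsr,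
        fun i hi => (hxpre i hi).trans (hypre i hi).symm, ?_, hxt⟩
      rw [hxm, hyk]
      field_simp

lemma st_total {u x y : Ell1} (hx : St u x) (hy : St u y) : St y x ∨ St x y := by
  rcases hx with rfl | ⟨m, s, hs0, hs1, hxpre, hxm, hxt⟩
  · exact Or.inr hy
  rcases hy with rfl | ⟨k, r, hr0, hr1, hypre, hyk, hyt⟩
  · exact Or.inl (Or.inr ⟨m, s, hs0, hs1, hxpre, hxm, hxt⟩)
  rcases lt_trichotomy m k with h | h | h
  · exact Or.inl (st_aux hs0 hs1 hr0 hxpre hxm hxt hypre hyk (Or.inl h))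
  · rcases le_total s r with hsr | hsr
    · exact Or.inl (st_aux hs0 hs1 hr0 hxpre hxm hxt hypre hyk (Or.inr ⟨h, hsr⟩))
    · exact Or.inr (st_aux hr0 hr1 hs0 hypre hyk hyt hxpre hxm (Or.inr ⟨h.symm, hsr⟩))
  · exact Or.inr (st_aux hr0 hr1 hs0 hypre hyk hyt hxpre hxm (Or.inl h))

lemma st_trans {w x y : Ell1} (hxy : St y x) (hyw : St w y) : St w x := by
  rcases hxy with rfl | ⟨m, s, hs0, hs1, hxpre, hxm, hxt⟩
  · exact hyw
  rcases hyw with rfl | ⟨k, r, hr0, hr1, hypre, hyk, hyt⟩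
  · exact Or.inr ⟨m, s, hs0, hs1, hxpre, hxm, hxt⟩
  rcases lt_trichotomy m k with h | rfl | h
  · refine Or.inr ⟨m, s, hs0, hs1, fun i hi => (hxpre i hi).trans (hypre i (hi.trans h)), ?_, hxt⟩
    rw [hxm, hypre m h]
  · refine Or.inr ⟨m, s * r, mul_nonneg hs0 hr0, mul_le_one₀ hs1 hr0 hr1,
      fun i hi => (hxpre i hi).trans (hypre i hi), ?_, hxt⟩
    rw [hxm, hyk]; ring
  · refine Or.inr ⟨k, r, hr0, hr1, fun i hi => (hxpre i (hi.trans h)).trans (hypre i hi),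
      ?_, fun j hj => ?_⟩
    · rw [hxpre k h, hyk]
    · rcases lt_trichotomy j m with hjm | rfl | hjm
      · rw [hxpre j hjm]; exact hyt j hj
      · rw [hxm, hyt j h]; ring
      · exact hxt j hjm

end SP

namespace SP

lemma lam (t : ℕ → Ell1) (n : ℕ) (x y : Ell1) :
    {j | j ∈ Set.Iio (n + 1) ∧ x ∈ stickPath (t j)} ∩
        {j | j ∈ Set.Iio (n + 1) ∧ y ∈ stickPath (t j)} =
        {j | j ∈ Set.Iio (n + 1) ∧ x ∈ stickPath (t j)} ∨
      {j | j ∈ Set.Iio (n + 1) ∧ x ∈ stickPath (t j)} ∩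
          {j | j ∈ Set.Iio (n + 1) ∧ y ∈ stickPath (t j)} =
          {j | j ∈ Set.Iio (n + 1) ∧ y ∈ stickPath (t j)} ∨
      {j | j ∈ Set.Iio (n + 1) ∧ x ∈ stickPath (t j)} ∩
          {j | j ∈ Set.Iio (n + 1) ∧ y ∈ stickPath (t j)} = ∅ := by
  by_cases hne : {j | j ∈ Set.Iio (n + 1) ∧ x ∈ stickPath (t j)} ∩
      {j | j ∈ Set.Iio (n + 1) ∧ y ∈ stickPath (t j)} = ∅
  · exact Or.inr (Or.inr hne)
  obtain ⟨j, hjx, hjy⟩ := Set.nonempty_iff_ne_empty.mpr hne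
  have hx := mem_path_iff_st.mp hjx.2
  have hy := mem_path_iff_st.mp hjy.2
  rcases st_total hx hy with h | h
  · refine Or.inr (Or.inl (Set.inter_eq_right.mpr ?_))
    rintro k ⟨hk, hky⟩
    exact ⟨hk, mem_path_iff_st.mpr (st_trans h (mem_path_iff_st.mp hky))⟩
  · refine Or.inl (Set.inter_eq_left.mpr ?_)
    rintro k ⟨hk, hkx⟩
    exact ⟨hk, mem_path_iff_st.mpr (st_trans h (mem_path_iff_st.mp hkx))⟩

lemma triv_cases {S A B : Set ℕ} (hA : A ∈ trivialHierarchy S) (hB : B ⊆ S) :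
    A ∩ B = A ∨ A ∩ B = B ∨ A ∩ B = ∅ := by
  simp only [trivialHierarchy, Set.mem_union, Set.mem_insert_iff, Set.mem_singleton_iff,
    Set.mem_setOf_eq] at hA
  rcases hA with (rfl | rfl) | ⟨s, hs, rfl⟩
  · exact Or.inr (Or.inl (Set.inter_eq_right.mpr hB))
  · exact Or.inr (Or.inr (Set.empty_inter B))
  · by_cases h : s ∈ B
    · exact Or.inl (Set.inter_eq_left.mpr (Set.singleton_subset_iff.mpr h))
    · exact Or.inr (Or.inr (Set.singleton_inter_eq_empty.mpr h))

end SP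

/-- for any sequence `(t_j)` of points of `ℓ¹`, the sets
`𝓗ₙ = {{j ∈ [n] : x ∈ [[0,t_j]]_sp} : x ∈ ℓ¹} ∪ Ξ([n])` form a consistent sequence of
hierarchies, i.e. a hierarchy on `ℕ`. -/
theorem derived_hierarchy_isHierarchySeq (t : ℕ → Ell1) :
    IsHierarchySeq (fun n =>
      {S | ∃ x : Ell1, S = {j | j ∈ Set.Iio (n + 1) ∧ x ∈ stickPath (t j)}} ∪
        trivialHierarchy (Set.Iio (n + 1))) := by
  intro n
  have hsub : ∀ A ∈ ({S | ∃ x : Ell1, S = {j | j ∈ Set.Iio (n + 1) ∧ x ∈ stickPath (t j)}} ∪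
      trivialHierarchy (Set.Iio (n + 1))), A ⊆ Set.Iio (n + 1) := by
    intro A hA
    rcases hA with ⟨x, rfl⟩ | hA
    · intro j hj; exact hj.1
    · simp only [trivialHierarchy, Set.mem_union, Set.mem_insert_iff, Set.mem_singleton_iff,
        Set.mem_setOf_eq] at hA
      rcases hA with (rfl | rfl) | ⟨s, hs, rfl⟩
      · exact subset_rfl
      · exact Set.empty_subset _
      · exact Set.singleton_subset_iff.mpr hs
  constructor
  · refine ⟨hsub, ?_, ?_, ?_, ?_⟩
    · intro A hA B hB
      have hB' := hsub B hB
      have hA' := hsub A hA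
      rcases hA with ⟨x, rfl⟩ | hA
      · rcases hB with ⟨y, rfl⟩ | hB
        · exact SP.lam t n x y
        · have h := SP.triv_cases hB hA'
          rcases h with h | h | h
          · exact Or.inr (Or.inl (by rw [Set.inter_comm]; exact h))
          · exact Or.inl (by rw [Set.inter_comm]; exact h)
          · exact Or.inr (Or.inr (by rw [Set.inter_comm]; exact h))
      · exact SP.triv_cases hA hB'
    · exact Set.mem_union_right _ (Set.mem_union_left _ (Set.mem_insert _ _))
    · intro s hs
      exact Set.mem_union_right _ (Set.mem_union_right _ ⟨s, hs, rfl⟩)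
    · exact Set.mem_union_right _ (Set.mem_union_left _ (Set.mem_insert_of_mem _ rfl))
  · ext A
    simp only [Set.mem_image, Set.mem_union, Set.mem_setOf_eq, trivialHierarchy,
      Set.mem_insert_iff, Set.mem_singleton_iff]
    constructor
    · rintro (⟨x, rfl⟩ | (rfl | rfl) | ⟨s, hs, rfl⟩)
      · refine ⟨{j | j ∈ Set.Iio (n + 1 + 1) ∧ x ∈ stickPath (t j)}, Or.inl ⟨x, rfl⟩, ?_⟩
        ext j
        simp only [Set.mem_inter_iff, Set.mem_setOf_eq, Set.mem_Iio]
        constructor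
        · rintro ⟨⟨_, hp⟩, hj⟩; exact ⟨hj, hp⟩
        · rintro ⟨hj, hp⟩; exact ⟨⟨by omega, hp⟩, hj⟩
      · refine ⟨Set.Iio (n + 1 + 1), Or.inr (Or.inl (Or.inl rfl)), ?_⟩
        ext j; simp only [Set.mem_inter_iff, Set.mem_Iio]; omega
      · exact ⟨∅, Or.inr (Or.inl (Or.inr rfl)), Set.empty_inter _⟩
      · refine ⟨{s}, Or.inr (Or.inr ⟨s, ?_, rfl⟩), ?_⟩
        · simp only [Set.mem_Iio] at hs ⊢; omega
        · exact Set.inter_eq_left.mpr (Set.singleton_subset_iff.mpr hs)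
    · rintro ⟨B, hB, rfl⟩
      rcases hB with ⟨x, rfl⟩ | (rfl | rfl) | ⟨s, hs, rfl⟩
      · refine Or.inl ⟨x, ?_⟩
        ext j
        simp only [Set.mem_inter_iff, Set.mem_setOf_eq, Set.mem_Iio]
        constructor
        · rintro ⟨⟨_, hp⟩, hj⟩; exact ⟨hj, hp⟩
        · rintro ⟨hj, hp⟩; exact ⟨⟨by omega, hp⟩, hj⟩
      · refine Or.inr (Or.inl (Or.inl ?_))
        ext j; simp only [Set.mem_inter_iff, Set.mem_Iio]; omega
      · exact Or.inr (Or.inl (Or.inr (Set.empty_inter _)))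
      · by_cases h : s < n + 1
        · refine Or.inr (Or.inr ⟨s, Set.mem_Iio.mpr h, ?_⟩)
          exact Set.inter_eq_left.mpr (Set.singleton_subset_iff.mpr (Set.mem_Iio.mpr h))
        · refine Or.inr (Or.inl (Or.inr ?_))
          exact Set.singleton_inter_eq_empty.mpr (by simpa using h)
end
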